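/- arXiv:1403.1505 — 3 statements merged into one kernel-verified Lean document; each statement's English description precedes it below -/
import Mathlib

section
/- Let φ be an N-function and w a weight on I. Then for every f ∈ L⁰(I), ‖f‖⁰_{ρ_φ(M_W,L¹)} = ‖f‖⁰_{M_{φ,w}}, i.e. inf{ ‖g‖_{M_W} + ‖h‖_{L¹} : g, h ∈ L⁰(I), f* = ρ_φ(|g|,|h|) } = inf_{k>0} (P_{φ,w}(kf) + 1)/k. -/
/-!
Write `Φ(a, b) = φ(a/b)·b` for the perspective of `φ`. Since an N-function is a continuous
increasing bijection of `[0, ∞)`, for `b > 0` the maps `Φ(·, b)` and `ρ_φ(b, ·)` are mutually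
inverse; both are positively homogeneous, and `g ≺ w` exactly when `‖g‖_{M_W} ≤ 1`.

Hence `g ≺ w` and `k > 0` yield the decomposition `f* = ρ_φ(|G|, |H|)` with `G = g/k` and
`H = Φ(f*, |G|)`, of cost `‖G‖_{M_W} + ‖H‖_{L¹} ≤ (∫ Φ(k f*, |g|) + 1)/k`. Conversely, for a
decomposition `f* = ρ_φ(|g|, |h|)` and `k = 1/(‖g‖_{M_W} + ε)` we get `k g ≺ w` and
`Φ(k f*, k|g|) ≤ k|h|`, so `(P_{φ,w}(k f) + 1)/k ≤ ‖h‖_{L¹} + ‖g‖_{M_W} + ε`.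
-/

open MeasureTheory Set Filter
open scoped ENNReal

noncomputable section

/-- The decreasing rearrangement of `f` with respect to Lebesgue measure on `I`. -/
def decRearr (I : Set ℝ) (f : ℝ → ℝ) (t : ℝ) : ℝ :=
  sInf {l : ℝ | 0 < l ∧ volume {s | s ∈ I ∧ l < |f s|} ≤ ENNReal.ofReal t}

/-- `φ(a/b)·b` with the convention `φ(c/0)·0 = 0` if `c = 0` and `= ∞` if `c ≠ 0`. -/
def phiRatio (φ : ℝ → ℝ) (a b : ℝ) : ℝ≥0∞ :=
  if b = 0 then (if a = 0 then 0 else ⊤) else ENNReal.ofReal (φ (a / b) * b)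

/-- Submajorization `g ≺ w` on `I` : `∫₀ᵗ g* ≤ ∫₀ᵗ w` for all `t ∈ I`. -/
def Submaj (I : Set ℝ) (w g : ℝ → ℝ) : Prop :=
  ∀ t ∈ I, ∫⁻ s in Ioo (0:ℝ) t, ENNReal.ofReal (decRearr I g s)
      ≤ ∫⁻ s in Ioo (0:ℝ) t, ENNReal.ofReal (w s)

/-- The modular `P_{φ,w}(f) = inf { ∫_I φ(f*/|g|)|g| : g ≺ w }`. -/
def Pmod (I : Set ℝ) (φ w f : ℝ → ℝ) : ℝ≥0∞ :=
  sInf { v : ℝ≥0∞ | ∃ g : ℝ → ℝ, Measurable g ∧ Submaj I w g ∧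
      v = ∫⁻ t in I, phiRatio φ (decRearr I f t) |g t| }

/-- The modular `I_{φ,w}(f) = ∫_I φ(f*) w`. -/
def Imod (I : Set ℝ) (φ w f : ℝ → ℝ) : ℝ≥0∞ :=
  ∫⁻ t in I, ENNReal.ofReal (φ (decRearr I f t) * w t)

/-- The Marcinkiewicz norm `‖g‖_{M_W} = sup_{t ∈ I, t > 0} (∫₀ᵗ g*)/W(t)`. -/
def MWnorm (I : Set ℝ) (w g : ℝ → ℝ) : ℝ≥0∞ :=
  ⨆ t ∈ I ∩ Ioi (0:ℝ),
    (∫⁻ s in Ioo (0:ℝ) t, ENNReal.ofReal (decRearr I g s)) /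
      ENNReal.ofReal (∫ s in Ioo (0:ℝ) t, w s)

/-- An Orlicz function: `φ(0) = 0`, `φ` convex, strictly increasing, `[0,∞) → [0,∞)`. -/
def OrliczOn (φ : ℝ → ℝ) : Prop :=
  φ 0 = 0 ∧ ConvexOn ℝ (Ici 0) φ ∧ StrictMonoOn φ (Ici 0) ∧ ∀ t, 0 ≤ t → 0 ≤ φ t

/-- An N-function: an Orlicz function with `φ(t)/t → 0` at `0⁺` and `φ(t)/t → ∞` at `∞`. -/
def NFun (φ : ℝ → ℝ) : Prop :=
  OrliczOn φ ∧ Tendsto (fun t => φ t / t) (nhdsWithin 0 (Ioi 0)) (nhds 0) ∧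
    Tendsto (fun t => φ t / t) atTop atTop

/-- The complementary function `φ*(s) = sup_{t ≥ 0} (st - φ(t))`. -/
def phiStar (φ : ℝ → ℝ) (s : ℝ) : ℝ := sSup ((fun t => s * t - φ t) '' Ici 0)

/-- The (generalized) inverse of an Orlicz function. -/
def phiInv (φ : ℝ → ℝ) (s : ℝ) : ℝ := sInf {t : ℝ | 0 ≤ t ∧ s ≤ φ t}

/-- The Calderón–Lozanovskii function `ρ_φ(t,s) = φ⁻¹(s/t)·t`. -/
def rhoFun (φ : ℝ → ℝ) (t s : ℝ) : ℝ := phiInv φ (s / t) * t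

/-- A weight on `I`: positive, decreasing and locally integrable. -/
def IsWeight (I : Set ℝ) (w : ℝ → ℝ) : Prop :=
  (∀ t ∈ I, 0 < w t) ∧ AntitoneOn w I ∧ ∀ t ∈ I, IntegrableOn w (Ioo 0 t)

/-- `I = [0,α)` with `0 < α ≤ ∞`. -/
def OLDomain (I : Set ℝ) : Prop := I = Ici 0 ∨ ∃ α : ℝ, 0 < α ∧ I = Ico 0 α

/-- The step function `Σ aᵢ χ_{[tᵢ₋₁,tᵢ)}`. -/
def stepFun (n : ℕ) (tt : Fin (n+1) → ℝ) (a : Fin n → ℝ) (s : ℝ) : ℝ :=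
  ∑ i : Fin n, if tt i.castSucc ≤ s ∧ s < tt i.succ then a i else 0

/-- `R(a,b) = F(a,b)/W(a,b)` where `F(a,b) = ∫_a^b f`, `W(a,b) = ∫_a^b w`. -/
def Rquot (w f : ℝ → ℝ) (a b : ℝ) : ℝ :=
  (∫ s in Ioo a b, f s) / (∫ s in Ioo a b, w s)

/-- `(a,b)` is a level interval of `f` with respect to `w`. -/
def IsLI (I : Set ℝ) (w f : ℝ → ℝ) (a b : ℝ) : Prop :=
  0 ≤ a ∧ a < b ∧ Ioo a b ⊆ I ∧ 0 < Rquot w f a b ∧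
    ∀ t ∈ Ioo a b, Rquot w f a t ≤ Rquot w f a b

/-- `(a,b)` is a maximal level interval of `f` with respect to `w`. -/
def IsMLI (I : Set ℝ) (w f : ℝ → ℝ) (a b : ℝ) : Prop :=
  IsLI I w f a b ∧ ∀ a' b', IsLI I w f a' b' → Ioo a b ⊆ Ioo a' b' → a = a' ∧ b = b'

/-- `f0` is a level function of `f` with respect to `w`. -/
def IsLevelFun (I : Set ℝ) (w f f0 : ℝ → ℝ) : Prop :=
  (∀ a b, IsMLI I w f a b → ∀ t ∈ Ioo a b, f0 t = Rquot w f a b * w t) ∧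
  (∀ t ∈ I, (∀ a b, IsMLI I w f a b → t ∉ Ioo a b) → f0 t = f t)

/-- The Köthe dual norm of the Orlicz–Lorentz space `Λ_{φ,w}` with the Luxemburg norm. -/
def KDnorm (I : Set ℝ) (φ w f : ℝ → ℝ) : ℝ≥0∞ :=
  sSup { v : ℝ≥0∞ | ∃ g : ℝ → ℝ, Measurable g ∧
      ({ε : ℝ | 0 < ε ∧ Imod I φ w (fun t => g t / ε) ≤ 1}).Nonempty ∧
      sInf {ε : ℝ | 0 < ε ∧ Imod I φ w (fun t => g t / ε) ≤ 1} ≤ 1 ∧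
      IntegrableOn (fun t => f t * g t) I ∧
      v = ENNReal.ofReal (∫ t in I, f t * g t) }

open scoped Pointwise

lemma OrliczOn.phiInv_apply {φ : ℝ → ℝ} (hφ : OrliczOn φ) {u : ℝ} (hu : 0 ≤ u) :
    phiInv φ (φ u) = u := by
  have hmem : u ∈ {t : ℝ | 0 ≤ t ∧ φ u ≤ φ t} := ⟨hu, le_rfl⟩
  have hlb : ∀ t ∈ {t : ℝ | 0 ≤ t ∧ φ u ≤ φ t}, u ≤ t := fun t ht =>
    (hφ.2.2.1.le_iff_le hu ht.1).1 ht.2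
  exact le_antisymm (csInf_le ⟨u, hlb⟩ hmem) (le_csInf ⟨u, hmem⟩ hlb)

lemma NFun.continuousOn {φ : ℝ → ℝ} (hφ : NFun φ) : ContinuousOn φ (Ici 0) := by
  obtain ⟨⟨hφ0, hconv, -, -⟩, hlim0, -⟩ := hφ
  intro x hx
  rcases (mem_Ici.1 hx).eq_or_lt with rfl | hx
  · rw [← continuousWithinAt_Ioi_iff_Ici, ContinuousWithinAt, hφ0]
    have := hlim0.mul (tendsto_nhdsWithin_of_tendsto_nhds (continuous_id.tendsto (0 : ℝ)))
    rw [zero_mul] at this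
    refine this.congr' (eventually_nhdsWithin_of_forall fun t ht => ?_)
    exact div_mul_cancel₀ _ (ne_of_gt ht)
  · have hcont := hconv.continuousOn_interior
    rw [interior_Ici] at hcont
    exact (hcont x hx).continuousAt (Ioi_mem_nhds hx) |>.continuousWithinAt

lemma NFun.tendsto_atTop {φ : ℝ → ℝ} (hφ : NFun φ) : Tendsto φ atTop atTop :=
  (hφ.2.2.atTop_mul_atTop₀ tendsto_id).congr'
    ((eventually_gt_atTop 0).mono fun _ ht => div_mul_cancel₀ _ (ne_of_gt ht))

lemma NFun.apply_phiInv {φ : ℝ → ℝ} (hφ : NFun φ) {s : ℝ} (hs : 0 ≤ s) :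
    φ (phiInv φ s) = s := by
  obtain ⟨b, hb, hsb⟩ :=
    ((eventually_ge_atTop 0).and (hφ.tendsto_atTop.eventually_ge_atTop s)).exists
  obtain ⟨u, hu, rfl⟩ := intermediate_value_Icc hb (hφ.continuousOn.mono Icc_subset_Ici_self)
    ⟨by rwa [hφ.1.1], hsb⟩
  rw [hφ.1.phiInv_apply hu.1]

lemma phiRatio_mul_mul (φ : ℝ → ℝ) {k : ℝ} (hk : 0 < k) (a b : ℝ) :
    phiRatio φ (k * a) (k * b) = ENNReal.ofReal k * phiRatio φ a b := by
  unfold phiRatio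
  by_cases hb : b = 0
  · by_cases ha : a = 0 <;> simp [ha, hb, hk, hk.ne', ENNReal.mul_top]
  · rw [if_neg (mul_ne_zero hk.ne' hb), if_neg hb, mul_div_mul_left _ _ hk.ne',
      ← ENNReal.ofReal_mul hk.le, mul_left_comm]

lemma NFun.phiRatio_rhoFun_le {φ : ℝ → ℝ} (hφ : NFun φ) {b c : ℝ} (hb : 0 ≤ b) (hc : 0 ≤ c) :
    phiRatio φ (rhoFun φ b c) b ≤ ENNReal.ofReal c := by
  rcases hb.eq_or_lt with rfl | hb
  · simp [phiRatio, rhoFun]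
  · rw [phiRatio, if_neg hb.ne', rhoFun, mul_div_cancel_right₀ _ hb.ne',
      hφ.apply_phiInv (div_nonneg hc hb.le), div_mul_cancel₀ _ hb.ne']

lemma OrliczOn.rhoFun_toReal_phiRatio {φ : ℝ → ℝ} (hφ : OrliczOn φ) {a b : ℝ} (ha : 0 ≤ a)
    (hb : 0 ≤ b) (hfin : phiRatio φ a b ≠ ⊤) : rhoFun φ b (phiRatio φ a b).toReal = a := by
  rcases hb.eq_or_lt with rfl | hb
  · by_cases ha0 : a = 0
    · simp [rhoFun, ha0]
    · simp [phiRatio, ha0] at hfin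
  · have hab : 0 ≤ a / b := div_nonneg ha hb.le
    rw [rhoFun, phiRatio, if_neg hb.ne',
      ENNReal.toReal_ofReal (mul_nonneg (hφ.2.2.2 _ hab) hb.le), mul_div_cancel_right₀ _ hb.ne',
      hφ.phiInv_apply hab, div_mul_cancel₀ _ hb.ne']

lemma measurable_phiRatio {α : Type*} [MeasurableSpace α] {φ : ℝ → ℝ}
    (hφ : MonotoneOn φ (Ici 0)) {a b : α → ℝ} (ha : Measurable a) (hb : Measurable b)
    (ha0 : ∀ t, 0 ≤ a t) (hb0 : ∀ t, 0 ≤ b t) :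
    Measurable fun t => phiRatio φ (a t) (b t) := by
  -- `φ` itself need not be measurable off `[0, ∞)`; its monotone extension is.
  set ψ : ℝ → ℝ := fun u => φ (max u 0)
  have hψ : Monotone ψ := fun u v huv =>
    hφ (le_max_right u 0) (le_max_right v 0) (max_le_max huv le_rfl)
  have heq : (fun t => phiRatio φ (a t) (b t)) = fun t => phiRatio ψ (a t) (b t) := by
    funext t
    simp only [phiRatio, ψ, max_eq_left (div_nonneg (ha0 t) (hb0 t))]
  rw [heq]
  exact Measurable.ite (hb (measurableSet_singleton 0))
    (Measurable.ite (ha (measurableSet_singleton 0)) measurable_const measurable_const)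
    ((hψ.measurable.comp (ha.div hb)).mul hb).ennreal_ofReal

lemma decRearr_nonneg (I : Set ℝ) (f : ℝ → ℝ) (t : ℝ) : 0 ≤ decRearr I f t :=
  Real.sInf_nonneg fun _ hx => hx.1.le

-- `decRearr` is antitone except at the junk value `sInf ∅ = 0`, which positivity rules out.
lemma decRearr_le_of_pos {I : Set ℝ} {f : ℝ → ℝ} {s t u : ℝ} (hs : 0 < decRearr I f s)
    (hst : s ≤ t) (htu : t ≤ u) : decRearr I f u ≤ decRearr I f t := by
  have mono : ∀ {x y : ℝ}, x ≤ y →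
      {l : ℝ | 0 < l ∧ volume {s | s ∈ I ∧ l < |f s|} ≤ ENNReal.ofReal x} ⊆
        {l : ℝ | 0 < l ∧ volume {s | s ∈ I ∧ l < |f s|} ≤ ENNReal.ofReal y} :=
    fun hxy l hl => ⟨hl.1, hl.2.trans (ENNReal.ofReal_le_ofReal hxy)⟩
  have hne : {l : ℝ | 0 < l ∧ volume {s | s ∈ I ∧ l < |f s|} ≤ ENNReal.ofReal s}.Nonempty :=
    nonempty_iff_ne_empty.2 fun he => by simp [decRearr, he] at hs
  exact csInf_le_csInf ⟨0, fun l hl => hl.1.le⟩ (hne.mono (mono hst)) (mono htu)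

lemma measurable_decRearr (I : Set ℝ) (f : ℝ → ℝ) : Measurable (decRearr I f) := by
  refine measurable_of_Ioi fun c => ?_
  rcases lt_or_ge c 0 with hc | hc
  · convert MeasurableSet.univ
    exact eq_univ_of_forall fun t => hc.trans_le (decRearr_nonneg I f t)
  · refine OrdConnected.measurableSet ⟨fun x hx y hy z hz => ?_⟩
    exact (show c < decRearr I f y from hy).trans_le
      (decRearr_le_of_pos (hc.trans_lt hx) hz.1 hz.2)

lemma decRearr_const_mul (I : Set ℝ) (f : ℝ → ℝ) {c : ℝ} (hc : 0 < c) (t : ℝ) :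
    decRearr I (fun s => c * f s) t = c * decRearr I f t := by
  have hlevel : ∀ l, {s | s ∈ I ∧ c * l < |c * f s|} = {s | s ∈ I ∧ l < |f s|} := fun l => by
    simp only [abs_mul, abs_of_pos hc, mul_lt_mul_iff_right₀ hc]
  have : {l : ℝ | 0 < l ∧ volume {s | s ∈ I ∧ l < |c * f s|} ≤ ENNReal.ofReal t}
      = c • {l : ℝ | 0 < l ∧ volume {s | s ∈ I ∧ l < |f s|} ≤ ENNReal.ofReal t} := by
    ext l
    rw [← mul_div_cancel₀ l hc.ne']
    simp only [mem_smul_set_iff_inv_smul_mem₀ hc.ne', smul_eq_mul, mem_ofPred_eq, hlevel,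
      inv_mul_cancel_left₀ hc.ne', mul_pos_iff_of_pos_left hc]
  rw [decRearr, this, Real.sInf_smul_of_nonneg hc.le, smul_eq_mul, decRearr]

lemma MWnorm_const_mul (I : Set ℝ) (w g : ℝ → ℝ) {c : ℝ} (hc : 0 < c) :
    MWnorm I w (fun t => c * g t) = ENNReal.ofReal c * MWnorm I w g := by
  simp only [MWnorm, decRearr_const_mul I g hc, ENNReal.ofReal_mul hc.le,
    lintegral_const_mul' _ _ ENNReal.ofReal_ne_top, mul_div_assoc, ENNReal.mul_iSup]

lemma OLDomain.Ioo_subset {I : Set ℝ} (hI : OLDomain I) {t : ℝ} (ht : t ∈ I) :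
    Ioo 0 t ⊆ I := by
  rcases hI with rfl | ⟨α, -, rfl⟩
  · exact fun s hs => le_of_lt hs.1
  · exact fun s hs => ⟨hs.1.le, hs.2.trans ht.2⟩

lemma IsWeight.ofReal_integral_eq_lintegral {I : Set ℝ} {w : ℝ → ℝ} (hw : IsWeight I w)
    (hI : OLDomain I) {t : ℝ} (ht : t ∈ I) :
    ENNReal.ofReal (∫ s in Ioo 0 t, w s) = ∫⁻ s in Ioo 0 t, ENNReal.ofReal (w s) :=
  ofReal_integral_eq_lintegral_ofReal (hw.2.2 t ht) <|
    (ae_restrict_iff' measurableSet_Ioo).2 <| ae_of_all _ fun s hs =>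
      (hw.1 s (hI.Ioo_subset ht hs)).le

lemma submaj_iff_MWnorm_le_one {I : Set ℝ} {w : ℝ → ℝ} (hI : OLDomain I) (hw : IsWeight I w)
    (g : ℝ → ℝ) : Submaj I w g ↔ MWnorm I w g ≤ 1 := by
  have hratio : ∀ t ∈ I, (∫⁻ s in Ioo (0:ℝ) t, ENNReal.ofReal (decRearr I g s)) /
      ENNReal.ofReal (∫ s in Ioo (0:ℝ) t, w s) ≤ 1 ↔
        ∫⁻ s in Ioo (0:ℝ) t, ENNReal.ofReal (decRearr I g s)
          ≤ ∫⁻ s in Ioo (0:ℝ) t, ENNReal.ofReal (w s) := fun t ht => by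
    rw [ENNReal.div_le_iff_le_mul (Or.inr ENNReal.one_ne_top) (Or.inr one_ne_zero), one_mul,
      hw.ofReal_integral_eq_lintegral hI ht]
  refine ⟨fun h => iSup₂_le fun t ht => (hratio t ht.1).2 (h t ht.1), fun h t ht => ?_⟩
  rcases le_or_gt t 0 with ht0 | ht0
  · simp [Ioo_eq_empty_of_le ht0]
  · exact (hratio t ht).1 ((iSup₂_le_iff.1 h) t ⟨ht, ht0⟩)

lemma ENNReal.le_sInf_add_div {a b c : ℝ≥0∞} {V : Set ℝ≥0∞} (hc0 : c ≠ 0) (hc : c ≠ ⊤)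
    (h : ∀ v ∈ V, a ≤ (v + b) / c) : a ≤ (sInf V + b) / c := by
  rw [ENNReal.le_div_iff_mul_le (Or.inl hc0) (Or.inl hc), ENNReal.sInf_add]
  exact le_iInf₂ fun v hv => (ENNReal.le_div_iff_mul_le (Or.inl hc0) (Or.inl hc)).1 (h v hv)

section Decomposition

variable {I : Set ℝ} {φ w f g : ℝ → ℝ}

lemma exists_rhoFun_decomp_of_submaj (hI : OLDomain I) (hw : IsWeight I w) (hφ : OrliczOn φ)
    {k : ℝ} (hk : 0 < k) (hg : Measurable g) (hgw : Submaj I w g)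
    (hfin : ∫⁻ t in I, phiRatio φ (decRearr I (fun s => k * f s) t) |g t| ≠ ⊤) :
    ∃ G H : ℝ → ℝ, Measurable G ∧ Measurable H ∧
      (∀ᵐ t ∂(volume.restrict I), decRearr I f t = rhoFun φ |G t| |H t|) ∧
      MWnorm I w G + ∫⁻ t in I, ENNReal.ofReal |H t| ≤
        ((∫⁻ t in I, phiRatio φ (decRearr I (fun s => k * f s) t) |g t|) + 1) /
          ENNReal.ofReal k := by
  set G : ℝ → ℝ := fun t => k⁻¹ * g t
  set X : ℝ → ℝ≥0∞ := fun t => phiRatio φ (decRearr I f t) |G t|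
  have hG : Measurable G := hg.const_mul _
  have hX : Measurable X := measurable_phiRatio hφ.2.2.1.monotoneOn (measurable_decRearr I f)
    hG.abs (decRearr_nonneg I f) fun _ => abs_nonneg _
  have hk0 : ENNReal.ofReal k ≠ 0 := by simpa using hk
  have hint : ∫⁻ t in I, phiRatio φ (decRearr I (fun s => k * f s) t) |g t| =
      ENNReal.ofReal k * ∫⁻ t in I, X t := by
    rw [← lintegral_const_mul' _ _ ENNReal.ofReal_ne_top]
    congr 1 with t
    rw [decRearr_const_mul I f hk, ← phiRatio_mul_mul φ hk, abs_mul, abs_of_pos (inv_pos.2 hk),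
      mul_inv_cancel_left₀ hk.ne']
  have hXfin : ∀ᵐ t ∂(volume.restrict I), X t ≠ ⊤ :=
    (ae_lt_top hX (ENNReal.lt_top_of_mul_ne_top_right (hint ▸ hfin) hk0).ne).mono
      fun _ => ne_of_lt
  refine ⟨G, fun t => (X t).toReal, hG, hX.ennreal_toReal, ?_, ?_⟩
  · filter_upwards [hXfin] with t ht
    rw [abs_of_nonneg ENNReal.toReal_nonneg,
      hφ.rhoFun_toReal_phiRatio (decRearr_nonneg I f t) (abs_nonneg _) ht]
  · have hMW : MWnorm I w G ≤ (ENNReal.ofReal k)⁻¹ := by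
      rw [MWnorm_const_mul I w g (inv_pos.2 hk), ENNReal.ofReal_inv_of_pos hk]
      exact mul_le_of_le_one_right' ((submaj_iff_MWnorm_le_one hI hw g).1 hgw)
    have hL1 : ∫⁻ t in I, ENNReal.ofReal |(X t).toReal| ≤ ∫⁻ t in I, X t :=
      lintegral_mono fun t => by
        rw [abs_of_nonneg ENNReal.toReal_nonneg]
        exact ENNReal.ofReal_toReal_le
    calc MWnorm I w G + ∫⁻ t in I, ENNReal.ofReal |(X t).toReal|
        ≤ (ENNReal.ofReal k)⁻¹ + ∫⁻ t in I, X t := add_le_add hMW hL1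
      _ = ((∫⁻ t in I, phiRatio φ (decRearr I (fun s => k * f s) t) |g t|) + 1) /
          ENNReal.ofReal k := by
        rw [hint, ENNReal.div_eq_inv_mul, mul_add, ← mul_assoc,
          ENNReal.inv_mul_cancel hk0 ENNReal.ofReal_ne_top, one_mul, mul_one, add_comm]

lemma Pmod_const_mul_le (hI : OLDomain I) (hw : IsWeight I w) (hφ : NFun φ) {h : ℝ → ℝ}
    {k : ℝ} (hk : 0 < k) (hg : Measurable g) (hkg : ENNReal.ofReal k * MWnorm I w g ≤ 1)
    (hfgh : ∀ᵐ t ∂(volume.restrict I), decRearr I f t = rhoFun φ |g t| |h t|) :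
    Pmod I φ w (fun t => k * f t) ≤ ENNReal.ofReal k * ∫⁻ t in I, ENNReal.ofReal |h t| := by
  have hsub : Submaj I w fun t => k * g t := by
    rwa [submaj_iff_MWnorm_le_one hI hw, MWnorm_const_mul I w g hk]
  calc Pmod I φ w (fun t => k * f t)
      ≤ ∫⁻ t in I, phiRatio φ (decRearr I (fun s => k * f s) t) |k * g t| :=
        sInf_le ⟨fun t => k * g t, hg.const_mul k, hsub, rfl⟩
    _ ≤ ∫⁻ t in I, ENNReal.ofReal k * ENNReal.ofReal |h t| := lintegral_mono_ae ?_
    _ = ENNReal.ofReal k * ∫⁻ t in I, ENNReal.ofReal |h t| :=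
        lintegral_const_mul' _ _ ENNReal.ofReal_ne_top
  refine hfgh.mono fun t ht => ?_
  rw [decRearr_const_mul I f hk, abs_mul, abs_of_pos hk, phiRatio_mul_mul φ hk, ht]
  exact mul_le_mul_right (hφ.phiRatio_rhoFun_le (abs_nonneg _) (abs_nonneg _)) _

lemma iInf_Pmod_le_MWnorm_add (hI : OLDomain I) (hw : IsWeight I w) (hφ : NFun φ)
    {h : ℝ → ℝ} (hg : Measurable g)
    (hfgh : ∀ᵐ t ∂(volume.restrict I), decRearr I f t = rhoFun φ |g t| |h t|) :
    ⨅ k ∈ Ioi (0:ℝ), (Pmod I φ w (fun t => k * f t) + 1) / ENNReal.ofReal k ≤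
      MWnorm I w g + ∫⁻ t in I, ENNReal.ofReal |h t| := by
  set A := MWnorm I w g
  set B := ∫⁻ t in I, ENNReal.ofReal |h t|
  refine ENNReal.le_of_forall_pos_le_add fun ε hε hlt => ?_
  have hA : A ≠ ⊤ := ne_top_of_le_ne_top hlt.ne le_self_add
  set a : ℝ := A.toReal + ε
  have ha : 0 < a := add_pos_of_nonneg_of_pos ENNReal.toReal_nonneg hε
  have ha0 : ENNReal.ofReal a ≠ 0 := by simpa using ha
  have hAa : A ≤ ENNReal.ofReal a := by
    rw [← ENNReal.ofReal_toReal hA]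
    exact ENNReal.ofReal_le_ofReal (le_add_of_nonneg_right (NNReal.coe_nonneg ε))
  have hka : ENNReal.ofReal a⁻¹ * A ≤ 1 := by
    rw [ENNReal.ofReal_inv_of_pos ha, ← ENNReal.div_eq_inv_mul,
      ENNReal.div_le_iff_le_mul (Or.inl ha0) (Or.inl ENNReal.ofReal_ne_top), one_mul]
    exact hAa
  calc ⨅ k ∈ Ioi (0:ℝ), (Pmod I φ w (fun t => k * f t) + 1) / ENNReal.ofReal k
      ≤ (Pmod I φ w (fun t => a⁻¹ * f t) + 1) / ENNReal.ofReal a⁻¹ := iInf₂_le _ (inv_pos.2 ha)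
    _ ≤ (ENNReal.ofReal a⁻¹ * B + 1) / ENNReal.ofReal a⁻¹ := by
      gcongr
      exact Pmod_const_mul_le hI hw hφ (inv_pos.2 ha) hg hka hfgh
    _ = B + ENNReal.ofReal a := by
      rw [ENNReal.ofReal_inv_of_pos ha, div_eq_mul_inv, inv_inv, add_mul, mul_right_comm,
        ENNReal.inv_mul_cancel ha0 ENNReal.ofReal_ne_top, one_mul, one_mul]
    _ = A + B + ε := by
      rw [ENNReal.ofReal_add ENNReal.toReal_nonneg (NNReal.coe_nonneg ε), ENNReal.ofReal_toReal hA,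
        ENNReal.ofReal_coe_nnreal]
      ring

end Decomposition

theorem statement4_general (I : Set ℝ) (hI : OLDomain I) (φ w : ℝ → ℝ)
    (hφ : NFun φ) (hw : IsWeight I w) (f : ℝ → ℝ) :
    sInf { v : ℝ≥0∞ | ∃ g h : ℝ → ℝ, Measurable g ∧ Measurable h ∧
        (∀ᵐ t ∂(volume.restrict I), decRearr I f t = rhoFun φ |g t| |h t|) ∧
        v = MWnorm I w g + ∫⁻ t in I, ENNReal.ofReal |h t| }
    = ⨅ k ∈ Ioi (0:ℝ),
        (Pmod I φ w (fun t => k * f t) + 1) / ENNReal.ofReal k := by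
  refine le_antisymm (le_iInf₂ fun k hk => ?_) (le_sInf ?_)
  · rw [Pmod]
    refine ENNReal.le_sInf_add_div (by simpa using hk) ENNReal.ofReal_ne_top ?_
    rintro _ ⟨g, hg, hgw, rfl⟩
    by_cases hfin : ∫⁻ t in I, phiRatio φ (decRearr I (fun s => k * f s) t) |g t| = ⊤
    · rw [hfin, top_add, ENNReal.top_div_of_ne_top ENNReal.ofReal_ne_top]
      exact le_top
    obtain ⟨G, H, hG, hH, hfGH, hle⟩ := exists_rhoFun_decomp_of_submaj hI hw hφ.1 hk hg hgw hfin
    exact le_trans (sInf_le ⟨G, H, hG, hH, hfGH, rfl⟩) hle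
  · rintro _ ⟨g, h, hg, -, hfgh, rfl⟩
    exact iInf_Pmod_le_MWnorm_add hI hw hφ hg hfgh

theorem statement4 (I : Set ℝ) (hI : OLDomain I) (φ w : ℝ → ℝ)
    (hφ : NFun φ) (hw : IsWeight I w) (f : ℝ → ℝ) (hf : Measurable f) :
    sInf { v : ℝ≥0∞ | ∃ g h : ℝ → ℝ, Measurable g ∧ Measurable h ∧
        (∀ᵐ t ∂(volume.restrict I), decRearr I f t = rhoFun φ |g t| |h t|) ∧
        v = MWnorm I w g + ∫⁻ t in I, ENNReal.ofReal |h t| }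
    = ⨅ k ∈ Ioi (0:ℝ),
        (Pmod I φ w (fun t => k * f t) + 1) / ENNReal.ofReal k :=
  statement4_general I hI φ w hφ hw f
end
end

section
/- Let φ be an N-function, w a weight on I, and f = Σ_{i=1}^n a_i·χ_{A_i} with a_1 > a_2 > … > a_n > 0, A_i = [t_{i−1}, t_i), 0 = t_0 < t_1 < … < t_n < ∞, t_n ∈ I. If g = Σ_{i=1}^n b_i·χ_{A_i} with b_1 ≥ b_2 ≥ … ≥ b_n > 0 is a minimizing function for P_{φ,w}(f) (i.e. g ≺ w and ∫_I φ(f/g)·g = P_{φ,w}(f)), then G(t_n) = ∫₀^{t_n} g = ∫₀^{t_n} w = W(t_n). -/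
open MeasureTheory Set Filter
open scoped ENNReal

noncomputable section

/-!
Write `T = tₙ`. If `G(T) < W(T)`, raise the lowest values of `b`: replace `b` by `max b (min b + δ)` with
`δ = (W(T) - G(T)) / T`. The new heights still decrease and add at most `δ T` to `G(T)`.
Submajorization survives: before the first raised block nothing changes, on the raised blocks up
to `T` the new primitive is affine and lies below the concave `W` at both ends, hence in between,
and after `T` it is constant while `W` grows. For an N-function `φ(u)/u` is strictly increasing
(convexity makes it increasing, and a flat piece would force `φ` to be linear near `0`), so
`u ↦ φ(a/u) u` strictly decreases and the modular strictly drops, contradicting minimality.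
-/

namespace NFun

variable {φ : ℝ → ℝ}

theorem strictMonoOn_div_self (hφ : NFun φ) : StrictMonoOn (fun t => φ t / t) (Ioi 0) := by
  obtain ⟨⟨h0, hconv, hmono, -⟩, hlim, -⟩ := hφ
  have div_le_div : ∀ {x y : ℝ}, 0 < x → x ≤ y → φ x / x ≤ φ y / y := fun hx hxy => by
    simpa [h0] using hconv.secant_mono (mem_Ici.2 le_rfl) (mem_Ici.2 hx.le)
      (mem_Ici.2 (hx.le.trans hxy)) hx.ne' (hx.trans_le hxy).ne' hxy
  intro u (hu : 0 < u) v (hv : 0 < v) huv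
  refine (div_le_div hu huv.le).lt_of_ne fun heq => ?_
  set C := φ v / v
  have hC : 0 < C := div_pos (h0 ▸ hmono (mem_Ici.2 le_rfl) (mem_Ici.2 hv.le) hv) hv
  -- equality of the secant slopes at `u < v` makes `φ` linear on `[0, u]`, against `φ(t)/t → 0`
  have hlin : ∀ s ∈ Ioo 0 u, C = φ s / s := by
    rintro s ⟨hs, hsu⟩
    refine (div_le_div hs (hsu.trans huv).le).antisymm' ?_
    have hslope := hconv.slope_mono_adjacent (mem_Ici.2 hs.le) (mem_Ici.2 hv.le) hsu huv
    have hφu : φ u = C * u := by rw [← heq, div_mul_cancel₀ _ hu.ne']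
    have hφv : φ v = C * v := (div_mul_cancel₀ _ hv.ne').symm
    rw [hφu, hφv, ← mul_sub, mul_div_cancel_right₀ _ (sub_pos.2 huv).ne',
      div_le_iff₀ (sub_pos.2 hsu)] at hslope
    rw [le_div_iff₀ hs]
    linarith
  have hlimC : Tendsto (fun t => φ t / t) (nhdsWithin 0 (Ioi 0)) (nhds C) :=
    tendsto_const_nhds.congr' (eventually_of_mem (Ioo_mem_nhdsGT hu) hlin)
  exact hC.ne' (tendsto_nhds_unique hlimC hlim)

theorem strictAntiOn_mul_div (hφ : NFun φ) {A : ℝ} (hA : 0 < A) :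
    StrictAntiOn (fun u => φ (A / u) * u) (Ioi 0) := by
  intro u (hu : 0 < u) v (hv : 0 < v) huv
  have key := hφ.strictMonoOn_div_self (div_pos hA hv) (div_pos hA hu)
    (div_lt_div_of_pos_left hA hu huv)
  have e : ∀ x, 0 < x → φ (A / x) * x = A * (φ (A / x) / (A / x)) := fun x hx => by
    field_simp
  simp only [e u hu, e v hv]
  exact mul_lt_mul_of_pos_left key hA

end NFun

namespace OLDomain

variable {I : Set ℝ}

theorem measurableSet (hI : OLDomain I) : MeasurableSet I := by
  rcases hI with rfl | ⟨α, -, rfl⟩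
  exacts [measurableSet_Ici, measurableSet_Ico]

theorem subset_Ici (hI : OLDomain I) : I ⊆ Ici 0 := by
  rcases hI with rfl | ⟨α, -, rfl⟩
  exacts [subset_rfl, Ico_subset_Ici_self]

theorem Icc_subset (hI : OLDomain I) {t : ℝ} (ht : t ∈ I) : Icc 0 t ⊆ I := by
  rcases hI with rfl | ⟨α, -, rfl⟩
  exacts [Icc_subset_Ici_self, Icc_subset_Ico_right ht.2]

end OLDomain

namespace IsWeight

variable {I : Set ℝ} {w : ℝ → ℝ}

theorem nonneg_of_mem_Ioo (hI : OLDomain I) (hw : IsWeight I w) {s t : ℝ} (ht : t ∈ I)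
    (hs : s ∈ Ioo 0 t) : 0 ≤ w s :=
  (hw.1 s (hI.Icc_subset ht (Ioo_subset_Icc_self hs))).le

theorem lintegral_Ioo (hI : OLDomain I) (hw : IsWeight I w) {t : ℝ} (ht : t ∈ I) :
    ∫⁻ s in Ioo 0 t, ENNReal.ofReal (w s) = ENNReal.ofReal (∫ s in Ioo 0 t, w s) :=
  (ofReal_integral_eq_lintegral_ofReal (hw.2.2 t ht)
    (ae_restrict_of_forall_mem measurableSet_Ioo fun _ => hw.nonneg_of_mem_Ioo hI ht)).symm

theorem integral_Ioo_nonneg (hI : OLDomain I) (hw : IsWeight I w) {t : ℝ} (ht : t ∈ I) :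
    0 ≤ ∫ s in Ioo 0 t, w s :=
  setIntegral_nonneg measurableSet_Ioo fun _ => hw.nonneg_of_mem_Ioo hI ht

theorem integral_Ioo_mono (hI : OLDomain I) (hw : IsWeight I w) {s t : ℝ} (hst : s ≤ t)
    (ht : t ∈ I) : ∫ x in Ioo 0 s, w x ≤ ∫ x in Ioo 0 t, w x :=
  setIntegral_mono_set (hw.2.2 t ht)
    (ae_restrict_of_forall_mem measurableSet_Ioo fun _ => hw.nonneg_of_mem_Ioo hI ht)
    (Eventually.of_forall (Ioo_subset_Ioo_right hst))

end IsWeight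

theorem integral_Ioo_add_integral_Ioo {f : ℝ → ℝ} {a b c : ℝ} (hab : a ≤ b) (hbc : b ≤ c)
    (hf : IntegrableOn f (Ioo a c)) :
    (∫ s in Ioo a b, f s) + ∫ s in Ioo b c, f s = ∫ s in Ioo a c, f s := by
  have hf' : IntegrableOn f (Ioc a c) := (integrableOn_Ioc_iff_integrableOn_Ioo enorm_ne_top).2 hf
  simp only [← integral_Ioc_eq_integral_Ioo, ← intervalIntegral.integral_of_le, hab, hbc,
    hab.trans hbc]
  exact intervalIntegral.integral_add_adjacent_intervals
    ((intervalIntegrable_iff_integrableOn_Ioc_of_le hab).2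
      (hf'.mono_set (Ioc_subset_Ioc_right hbc)))
    ((intervalIntegrable_iff_integrableOn_Ioc_of_le hbc).2
      (hf'.mono_set (Ioc_subset_Ioc_left hab)))

theorem integral_Ioo_of_eqOn {f : ℝ → ℝ} {a b κ : ℝ} (hab : a ≤ b) (hf : ∀ s ∈ Ioo a b, f s = κ) :
    ∫ s in Ioo a b, f s = κ * (b - a) := by
  rw [setIntegral_congr_fun measurableSet_Ioo hf, setIntegral_const,
    Real.volume_real_Ioo_of_le hab, smul_eq_mul, mul_comm]

theorem AntitoneOn.sub_mul_integral_Ioo_le {w : ℝ → ℝ} {c t T : ℝ} (hw : AntitoneOn w (Icc c T))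
    (hint : IntegrableOn w (Ioo c T)) (hct : c ≤ t) (htT : t ≤ T) :
    (t - c) * ∫ s in Ioo c T, w s ≤ (T - c) * ∫ s in Ioo c t, w s := by
  have ht : t ∈ Icc c T := ⟨hct, htT⟩
  have hA : (t - c) * w t ≤ ∫ s in Ioo c t, w s := by
    have := setIntegral_ge_of_const_le measurableSet_Ioo (by simp)
      (fun s hs => hw ⟨hs.1.le, hs.2.le.trans htT⟩ ht hs.2.le)
      (hint.mono_set (Ioo_subset_Ioo_right htT))
    rwa [Real.volume_real_Ioo_of_le hct, smul_eq_mul] at this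
  have hB : ∫ s in Ioo t T, w s ≤ (T - t) * w t := by
    have := setIntegral_mono_on (hint.mono_set (Ioo_subset_Ioo_left hct))
      (integrableOn_const (C := w t) (by simp)) measurableSet_Ioo
      (fun s hs => hw ht ⟨hct.trans hs.1.le, hs.2.le⟩ hs.1.le)
    rwa [setIntegral_const, Real.volume_real_Ioo_of_le htT, smul_eq_mul] at this
  rw [← integral_Ioo_add_integral_Ioo hct htT hint]
  nlinarith [mul_le_mul_of_nonneg_left hB (sub_nonneg.2 hct),
    mul_le_mul_of_nonneg_left hA (sub_nonneg.2 htT)]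

/-- Since `w` decreases, `t ↦ ∫₀ᵗ w` is concave, while the primitive of `g` is affine on `[c, T]`. -/
theorem integral_Ioo_le_of_eqOn_Ico {g w : ℝ → ℝ} {c T κ : ℝ} (hc : 0 ≤ c) (hcT : c ≤ T)
    (hg : IntegrableOn g (Ioo 0 T)) (hgκ : ∀ s ∈ Ico c T, g s = κ)
    (hw : AntitoneOn w (Icc c T)) (hwint : IntegrableOn w (Ioo 0 T))
    (hc_le : ∫ s in Ioo 0 c, g s ≤ ∫ s in Ioo 0 c, w s)
    (hT_le : ∫ s in Ioo 0 T, g s ≤ ∫ s in Ioo 0 T, w s) {t : ℝ} (hct : c ≤ t) (htT : t ≤ T) :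
    ∫ s in Ioo 0 t, g s ≤ ∫ s in Ioo 0 t, w s := by
  have hsplit : ∀ {f : ℝ → ℝ}, IntegrableOn f (Ioo 0 T) → ∀ x, c ≤ x → x ≤ T →
      ∫ s in Ioo 0 x, f s = (∫ s in Ioo 0 c, f s) + ∫ s in Ioo c x, f s := fun hf x hcx hxT =>
    (integral_Ioo_add_integral_Ioo hc hcx (hf.mono_set (Ioo_subset_Ioo_right hxT))).symm
  have hgx : ∀ x, c ≤ x → x ≤ T → ∫ s in Ioo c x, g s = κ * (x - c) := fun x hcx hxT =>
    integral_Ioo_of_eqOn hcx fun s hs => hgκ s ⟨hs.1.le, hs.2.trans_le hxT⟩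
  have hchord := hw.sub_mul_integral_Ioo_le (hwint.mono_set (Ioo_subset_Ioo_left hc)) hct htT
  rw [hsplit hg t hct htT, hsplit hwint t hct htT, hgx t hct htT]
  rw [hsplit hg T hcT le_rfl, hsplit hwint T hcT le_rfl, hgx T hcT le_rfl] at hT_le
  rcases hcT.eq_or_lt with rfl | hcT'
  · obtain rfl := le_antisymm htT hct
    simpa using hc_le
  refine le_of_mul_le_mul_left ?_ (sub_pos.2 hcT')
  nlinarith [mul_le_mul_of_nonneg_left hT_le (sub_nonneg.2 hct),
    mul_le_mul_of_nonneg_left hc_le (sub_nonneg.2 htT)]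

theorem decRearr_eq_self {I : Set ℝ} {f : ℝ → ℝ} {T : ℝ} (hI : Ico 0 T ⊆ I)
    (hf : ∀ x, 0 ≤ f x) (hsupp : ∀ x ∉ Ico 0 T, f x = 0) (hanti : AntitoneOn f (Ico 0 T))
    (hright : ∀ s ∈ Ico 0 T, ContinuousWithinAt f (Ici s) s) {s : ℝ} (hs : 0 ≤ s) :
    decRearr I f s = f s := by
  set S := {l : ℝ | 0 < l ∧ volume {x | x ∈ I ∧ l < |f x|} ≤ ENNReal.ofReal s}
  have mem_S : ∀ l, f s < l → l ∈ S := by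
    refine fun l hl => ⟨(hf s).trans_lt hl, ?_⟩
    calc volume {x | x ∈ I ∧ l < |f x|} ≤ volume (Ico 0 s) := by
          refine measure_mono fun x ⟨_, hx⟩ => ?_
          rw [abs_of_nonneg (hf x)] at hx
          have hxT : x ∈ Ico 0 T := by_contra fun h => by linarith [hsupp x h, hf s]
          refine ⟨hxT.1, lt_of_not_ge fun hsx => ?_⟩
          linarith [hanti ⟨hs, hsx.trans_lt hxT.2⟩ hxT hsx]
      _ = ENNReal.ofReal s := by rw [Real.volume_Ico, sub_zero]
  have le_of_mem_S : ∀ l ∈ S, f s ≤ l := by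
    rintro l ⟨hl, hvol⟩
    by_contra! hlt
    have hsT : s ∈ Ico 0 T := by_contra fun h => by linarith [hsupp s h]
    obtain ⟨u, hsu, hu⟩ := mem_nhdsGE_iff_exists_Ico_subset.1
      ((hright s hsT).eventually (lt_mem_nhds hlt))
    have hsub : Ico 0 (min u T) ⊆ {x | x ∈ I ∧ l < |f x|} := by
      intro x hx
      have hxT : x ∈ Ico 0 T := ⟨hx.1, hx.2.trans_le (min_le_right _ _)⟩
      refine ⟨hI hxT, ?_⟩
      rw [abs_of_nonneg (hf x)]
      rcases lt_or_ge x s with hxs | hsx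
      · exact hlt.trans_le (hanti hxT hsT hxs.le)
      · exact hu ⟨hsx, hx.2.trans_le (min_le_left _ _)⟩
    have := (measure_mono hsub).trans hvol
    rw [Real.volume_Ico, sub_zero, ENNReal.ofReal_le_ofReal_iff hs] at this
    exact (lt_min hsu hsT.2).not_ge this
  refine le_antisymm ?_ (le_csInf ⟨f s + 1, mem_S _ (lt_add_one _)⟩ le_of_mem_S)
  exact le_of_forall_gt_imp_ge_of_dense fun l hl =>
    csInf_le ⟨f s, le_of_mem_S⟩ (mem_S l hl)

section stepFun

variable {n : ℕ} {tt : Fin (n+1) → ℝ}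

theorem le_of_mem_Ico_of_mem_Ico (htt : StrictMono tt) {i j : Fin n} {x y : ℝ}
    (hx : x ∈ Ico (tt i.castSucc) (tt i.succ)) (hy : y ∈ Ico (tt j.castSucc) (tt j.succ))
    (hxy : x ≤ y) : i ≤ j :=
  Fin.castSucc_lt_succ_iff.1 (htt.lt_iff_lt.1 (hx.1.trans_lt (hxy.trans_lt hy.2)))

theorem exists_mem_Ico {s : ℝ} (hs : s ∈ Ico (tt 0) (tt (Fin.last n))) :
    ∃ i : Fin n, s ∈ Ico (tt i.castSucc) (tt i.succ) := by
  by_contra! h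
  have hle : ∀ j, tt j ≤ s := fun j =>
    Fin.induction hs.1 (fun i hi => not_lt.1 fun hlt => h i ⟨hi, hlt⟩) j
  exact (hle (Fin.last n)).not_gt hs.2

theorem iUnion_Ico_eq (htt : Monotone tt) :
    ⋃ i : Fin n, Ico (tt i.castSucc) (tt i.succ) = Ico (tt 0) (tt (Fin.last n)) := by
  refine Subset.antisymm (iUnion_subset fun i => Ico_subset_Ico ?_ ?_) fun s hs => ?_
  · exact htt (Fin.zero_le _)
  · exact htt (Fin.le_last _)
  · exact mem_iUnion.2 (exists_mem_Ico hs)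

theorem stepFun_eq_of_mem (htt : StrictMono tt) (β : Fin n → ℝ) {i : Fin n} {s : ℝ}
    (hs : s ∈ Ico (tt i.castSucc) (tt i.succ)) : stepFun n tt β s = β i := by
  rw [stepFun, Finset.sum_eq_single i (fun j _ hji => if_neg fun hj => hji ?_) (by simp)]
  · exact if_pos hs
  · exact (le_of_mem_Ico_of_mem_Ico htt hj hs le_rfl).antisymm
      (le_of_mem_Ico_of_mem_Ico htt hs hj le_rfl)

theorem stepFun_eq_zero (htt : Monotone tt) (β : Fin n → ℝ) {s : ℝ}
    (hs : s ∉ Ico (tt 0) (tt (Fin.last n))) : stepFun n tt β s = 0 :=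
  Finset.sum_eq_zero fun i _ => if_neg fun hi =>
    hs ((iUnion_Ico_eq htt).subset (mem_iUnion.2 ⟨i, hi⟩))

theorem stepFun_eq_sum_indicator (β : Fin n → ℝ) :
    stepFun n tt β =
      fun s => ∑ i, (Ico (tt i.castSucc) (tt i.succ)).indicator (fun _ => β i) s := by
  ext s
  simp [stepFun, indicator_apply]

theorem measurable_stepFun (β : Fin n → ℝ) : Measurable (stepFun n tt β) := by
  rw [stepFun_eq_sum_indicator]
  exact Finset.measurable_sum _ fun i _ => measurable_const.indicator measurableSet_Ico

theorem integrable_stepFun (β : Fin n → ℝ) : Integrable (stepFun n tt β) := by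
  rw [stepFun_eq_sum_indicator]
  exact integrable_finsetSum _ fun i _ =>
    (integrableOn_const (by simp)).integrable_indicator measurableSet_Ico

theorem stepFun_nonneg {β : Fin n → ℝ} (hβ : ∀ i, 0 ≤ β i) (s : ℝ) : 0 ≤ stepFun n tt β s :=
  Finset.sum_nonneg fun i _ => by split <;> simp [hβ i]

theorem antitoneOn_stepFun (htt : StrictMono tt) {β : Fin n → ℝ} (hβ : Antitone β) :
    AntitoneOn (stepFun n tt β) (Ico (tt 0) (tt (Fin.last n))) := by
  intro x hx y hy hxy
  obtain ⟨i, hi⟩ := exists_mem_Ico hx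
  obtain ⟨j, hj⟩ := exists_mem_Ico hy
  rw [stepFun_eq_of_mem htt β hi, stepFun_eq_of_mem htt β hj]
  exact hβ (le_of_mem_Ico_of_mem_Ico htt hi hj hxy)

theorem continuousWithinAt_Ici_stepFun (htt : StrictMono tt) (β : Fin n → ℝ) {s : ℝ}
    (hs : s ∈ Ico (tt 0) (tt (Fin.last n))) : ContinuousWithinAt (stepFun n tt β) (Ici s) s := by
  obtain ⟨i, hi⟩ := exists_mem_Ico hs
  refine continuousWithinAt_const.congr_of_eventuallyEq ?_ (stepFun_eq_of_mem htt β hi)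
  filter_upwards [Ico_mem_nhdsGE (α := ℝ) hi.2] with x hx
  exact stepFun_eq_of_mem htt β ⟨hi.1.trans hx.1, hx.2⟩

theorem decRearr_stepFun {I : Set ℝ} (htt0 : tt 0 = 0) (htt : StrictMono tt)
    (hI : Ico 0 (tt (Fin.last n)) ⊆ I) {β : Fin n → ℝ} (hβ : Antitone β) (hβ0 : ∀ i, 0 ≤ β i)
    {s : ℝ} (hs : 0 ≤ s) : decRearr I (stepFun n tt β) s = stepFun n tt β s := by
  have hIco : Ico (tt 0) (tt (Fin.last n)) = Ico 0 (tt (Fin.last n)) := by rw [htt0]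
  exact decRearr_eq_self hI (stepFun_nonneg hβ0)
    (fun x hx => stepFun_eq_zero htt.monotone β (hIco ▸ hx)) (hIco ▸ antitoneOn_stepFun htt hβ)
    (fun x hx => continuousWithinAt_Ici_stepFun htt β (hIco ▸ hx)) hs

theorem setLIntegral_eq_sum_of_eqOn_Ico {I : Set ℝ} (htt : StrictMono tt)
    (hI : Ico (tt 0) (tt (Fin.last n)) ⊆ I) {h : ℝ → ℝ≥0∞} {c : Fin n → ℝ≥0∞}
    (hc : ∀ i, ∀ s ∈ Ico (tt i.castSucc) (tt i.succ), h s = c i)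
    (h0 : ∀ s ∉ Ico (tt 0) (tt (Fin.last n)), h s = 0) :
    ∫⁻ s in I, h s = ∑ i, c i * ENNReal.ofReal (tt i.succ - tt i.castSucc) := by
  have hsupp : Function.support h ⊆ Ico (tt 0) (tt (Fin.last n)) := fun s hs =>
    by_contra fun hs' => hs (h0 s hs')
  have hdisj :
      Pairwise (Function.onFun Disjoint fun i : Fin n => Ico (tt i.castSucc) (tt i.succ)) :=
    fun i j hij => disjoint_left.2 fun x hi hj =>
      hij ((le_of_mem_Ico_of_mem_Ico htt hi hj le_rfl).antisymm
        (le_of_mem_Ico_of_mem_Ico htt hj hi le_rfl))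
  rw [setLIntegral_eq_of_support_subset (hsupp.trans hI), ← setLIntegral_eq_of_support_subset hsupp,
    ← iUnion_Ico_eq htt.monotone, lintegral_iUnion (fun _ => measurableSet_Ico) hdisj, tsum_fintype]
  refine Finset.sum_congr rfl fun i _ => ?_
  rw [setLIntegral_congr_fun measurableSet_Ico (hc i), setLIntegral_const, Real.volume_Ico]

end stepFun

section modular

variable {n : ℕ} {tt : Fin (n+1) → ℝ} {I : Set ℝ} {φ : ℝ → ℝ}

theorem Pmod_le_of_submaj {w f g : ℝ → ℝ} (hg : Measurable g) (hsub : Submaj I w g) :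
    Pmod I φ w f ≤ ∫⁻ t in I, phiRatio φ (decRearr I f t) |g t| :=
  sInf_le ⟨g, hg, hsub, rfl⟩

theorem setLIntegral_phiRatio_stepFun (htt : StrictMono tt)
    (hI : Ico (tt 0) (tt (Fin.last n)) ⊆ I) (hφ : ∀ t, 0 ≤ t → 0 ≤ φ t) {a β : Fin n → ℝ}
    (ha : ∀ i, 0 ≤ a i) (hβ : ∀ i, 0 < β i) :
    ∫⁻ t in I, phiRatio φ (stepFun n tt a t) (stepFun n tt β t) =
      ENNReal.ofReal (∑ i, φ (a i / β i) * β i * (tt i.succ - tt i.castSucc)) := by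
  have hterm_nonneg : ∀ i, 0 ≤ φ (a i / β i) * β i :=
    fun i => mul_nonneg (hφ _ (div_nonneg (ha i) (hβ i).le)) (hβ i).le
  rw [setLIntegral_eq_sum_of_eqOn_Ico htt hI (c := fun i => ENNReal.ofReal (φ (a i / β i) * β i)),
    ENNReal.ofReal_sum_of_nonneg fun i _ =>
      mul_nonneg (hterm_nonneg i) (sub_nonneg.2 (htt.monotone (Fin.castSucc_le_succ i)))]
  · simp only [ENNReal.ofReal_mul (hterm_nonneg _)]
  · intro i s hs
    rw [stepFun_eq_of_mem htt a hs, stepFun_eq_of_mem htt β hs, phiRatio, if_neg (hβ i).ne']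
  · intro s hs
    simp [phiRatio, stepFun_eq_zero htt.monotone _ hs]

theorem setLIntegral_phiRatio_stepFun_lt (hφ : NFun φ) (htt : StrictMono tt)
    (hI : Ico (tt 0) (tt (Fin.last n)) ⊆ I) {a b b' : Fin n → ℝ} (ha : ∀ i, 0 < a i)
    (hb : ∀ i, 0 < b i) (hbb' : b ≤ b') (hlt : ∃ i, b i < b' i) :
    ∫⁻ t in I, phiRatio φ (stepFun n tt a t) (stepFun n tt b' t) <
      ∫⁻ t in I, phiRatio φ (stepFun n tt a t) (stepFun n tt b t) := by
  have hφ0 : ∀ t, 0 ≤ t → 0 ≤ φ t := hφ.1.2.2.2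
  have hb' : ∀ i, 0 < b' i := fun i => (hb i).trans_le (hbb' i)
  have hlen : ∀ i : Fin n, 0 < tt i.succ - tt i.castSucc :=
    fun i => sub_pos.2 (htt i.castSucc_lt_succ)
  have hmono := fun i => (hφ.strictAntiOn_mul_div (ha i)).antitoneOn (hb i) (hb' i) (hbb' i)
  rw [setLIntegral_phiRatio_stepFun htt hI hφ0 (fun i => (ha i).le) hb,
    setLIntegral_phiRatio_stepFun htt hI hφ0 (fun i => (ha i).le) hb',
    ENNReal.ofReal_lt_ofReal_iff_of_nonneg (Finset.sum_nonneg fun i _ => mul_nonneg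
      (mul_nonneg (hφ0 _ (div_pos (ha i) (hb' i)).le) (hb' i).le) (hlen i).le)]
  obtain ⟨i₀, hi₀⟩ := hlt
  exact Finset.sum_lt_sum (fun i _ => mul_le_mul_of_nonneg_right (hmono i) (hlen i).le)
    ⟨i₀, Finset.mem_univ _, mul_lt_mul_of_pos_right
      (hφ.strictAntiOn_mul_div (ha i₀) (hb i₀) (hb' i₀) hi₀) (hlen i₀)⟩

end modular

section perturbation

variable {n : ℕ} {tt : Fin (n+1) → ℝ} {I : Set ℝ} {w : ℝ → ℝ}

theorem submaj_stepFun_iff (hI : OLDomain I) (hw : IsWeight I w) (htt0 : tt 0 = 0)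
    (htt : StrictMono tt) (hT : tt (Fin.last n) ∈ I) {β : Fin n → ℝ} (hβ : Antitone β)
    (hβ0 : ∀ i, 0 ≤ β i) :
    Submaj I w (stepFun n tt β) ↔
      ∀ t ∈ I, ∫ s in Ioo 0 t, stepFun n tt β s ≤ ∫ s in Ioo 0 t, w s := by
  refine forall₂_congr fun t ht => ?_
  have hIco : Ico 0 (tt (Fin.last n)) ⊆ I := Ico_subset_Icc_self.trans (hI.Icc_subset hT)
  rw [setLIntegral_congr_fun measurableSet_Ioo fun s hs => by
      rw [decRearr_stepFun htt0 htt hIco hβ hβ0 hs.1.le],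
    ← ofReal_integral_eq_lintegral_ofReal (integrable_stepFun β).integrableOn
      (ae_of_all _ (stepFun_nonneg hβ0)),
    hw.lintegral_Ioo hI ht, ENNReal.ofReal_le_ofReal_iff (hw.integral_Ioo_nonneg hI ht)]

theorem stepFun_sup_const_of_lt (htt : StrictMono tt) {b : Fin n → ℝ} {κ : ℝ} {K : Fin n}
    (hK : ∀ i < K, κ ≤ b i) {s : ℝ} (hs : s < tt K.castSucc) :
    stepFun n tt (b ⊔ fun _ => κ) s = stepFun n tt b s := by
  by_cases hsT : s ∈ Ico (tt 0) (tt (Fin.last n))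
  · obtain ⟨i, hi⟩ := exists_mem_Ico hsT
    have hiK : i < K := Fin.castSucc_lt_castSucc_iff.1 (htt.lt_iff_lt.1 (hi.1.trans_lt hs))
    rw [stepFun_eq_of_mem htt _ hi, stepFun_eq_of_mem htt _ hi]
    exact sup_eq_left.2 (hK i hiK)
  · rw [stepFun_eq_zero htt.monotone _ hsT, stepFun_eq_zero htt.monotone _ hsT]

theorem stepFun_sup_const_of_mem_Ico (htt : StrictMono tt) {b : Fin n → ℝ} (hb : Antitone b)
    {κ : ℝ} {K : Fin n} (hK : b K ≤ κ) {s : ℝ}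
    (hs : s ∈ Ico (tt K.castSucc) (tt (Fin.last n))) :
    stepFun n tt (b ⊔ fun _ => κ) s = κ := by
  obtain ⟨i, hi⟩ := exists_mem_Ico ⟨(htt.monotone (Fin.zero_le _)).trans hs.1, hs.2⟩
  have hKi : K ≤ i := le_of_mem_Ico_of_mem_Ico htt ⟨le_rfl, htt K.castSucc_lt_succ⟩ hi hs.1
  rw [stepFun_eq_of_mem htt _ hi]
  exact sup_eq_right.2 ((hb hKi).trans hK)

theorem integral_stepFun_sup_const_le (hI : OLDomain I) (hw : IsWeight I w) (htt0 : tt 0 = 0)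
    (htt : StrictMono tt) (hT : tt (Fin.last n) ∈ I) {b : Fin n → ℝ} (hb : Antitone b) {κ : ℝ}
    {K : Fin n} (hKκ : b K ≤ κ) (hKmin : ∀ i < K, κ ≤ b i)
    (hsub : ∀ t ∈ I, ∫ s in Ioo 0 t, stepFun n tt b s ≤ ∫ s in Ioo 0 t, w s)
    (hT_le : ∫ s in Ioo 0 (tt (Fin.last n)), stepFun n tt (b ⊔ fun _ => κ) s ≤
      ∫ s in Ioo 0 (tt (Fin.last n)), w s) {t : ℝ} (ht : t ∈ I) :
    ∫ s in Ioo 0 t, stepFun n tt (b ⊔ fun _ => κ) s ≤ ∫ s in Ioo 0 t, w s := by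
  set T := tt (Fin.last n)
  set c := tt K.castSucc
  have hc : 0 ≤ c := htt0 ▸ htt.monotone (Fin.zero_le _)
  have hcT : c ≤ T := htt.monotone (Fin.le_last _)
  have hbefore : ∀ x ≤ c, ∫ s in Ioo 0 x, stepFun n tt (b ⊔ fun _ => κ) s =
      ∫ s in Ioo 0 x, stepFun n tt b s := fun x hxc =>
    setIntegral_congr_fun measurableSet_Ioo fun s hs =>
      stepFun_sup_const_of_lt htt hKmin (hs.2.trans_le hxc)
  rcases le_total t c with htc | hct
  · exact (hbefore t htc).trans_le (hsub t ht)
  rcases le_total t T with htT | hTt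
  · exact integral_Ioo_le_of_eqOn_Ico hc hcT (integrable_stepFun _).integrableOn
      (fun s hs => stepFun_sup_const_of_mem_Ico htt hb hKκ hs)
      (hw.2.1.mono ((Icc_subset_Icc_left hc).trans (hI.Icc_subset hT))) (hw.2.2 T hT)
      ((hbefore c le_rfl).trans_le (hsub c (hI.Icc_subset hT ⟨hc, hcT⟩))) hT_le hct htT
  · calc ∫ s in Ioo 0 t, stepFun n tt (b ⊔ fun _ => κ) s
        = ∫ s in Ioo 0 T, stepFun n tt (b ⊔ fun _ => κ) s := by
          have hzero : ∫ s in Ioo T t, stepFun n tt (b ⊔ fun _ => κ) s = 0 :=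
            setIntegral_eq_zero_of_forall_eq_zero fun s hs =>
              stepFun_eq_zero htt.monotone _ fun h => h.2.not_gt hs.1
          rw [← integral_Ioo_add_integral_Ioo (hc.trans hcT) hTt
            (integrable_stepFun _).integrableOn, hzero, add_zero]
      _ ≤ ∫ s in Ioo 0 T, w s := hT_le
      _ ≤ ∫ s in Ioo 0 t, w s := hw.integral_Ioo_mono hI hTt ht

theorem exists_submaj_stepFun_gt (hI : OLDomain I) (hw : IsWeight I w) (htt0 : tt 0 = 0)
    (htt : StrictMono tt) (hT : tt (Fin.last n) ∈ I) {b : Fin n → ℝ} (hb : Antitone b)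
    (hsub : ∀ t ∈ I, ∫ s in Ioo 0 t, stepFun n tt b s ≤ ∫ s in Ioo 0 t, w s)
    (hlt : ∫ s in Ioo 0 (tt (Fin.last n)), stepFun n tt b s <
      ∫ s in Ioo 0 (tt (Fin.last n)), w s) :
    ∃ b' : Fin n → ℝ, Antitone b' ∧ b ≤ b' ∧ (∃ i, b i < b' i) ∧
      ∀ t ∈ I, ∫ s in Ioo 0 t, stepFun n tt b' s ≤ ∫ s in Ioo 0 t, w s := by
  set T := tt (Fin.last n)
  have hT0 : 0 < T := lt_of_not_ge fun h => by simp [Ioo_eq_empty h.not_gt] at hlt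
  obtain ⟨i₁, -⟩ := exists_mem_Ico (show 0 ∈ Ico (tt 0) T by rw [htt0]; exact ⟨le_rfl, hT0⟩)
  have : Nonempty (Fin n) := ⟨i₁⟩
  obtain ⟨i₀, hi₀⟩ := Finite.exists_min b
  -- raising `b` to at least `b i₀ + δ` adds at most `δ * T`, the gap `W(T) - G(T)`, up to `T`
  set δ := ((∫ s in Ioo 0 T, w s) - ∫ s in Ioo 0 T, stepFun n tt b s) / T
  have hδ : 0 < δ := div_pos (sub_pos.2 hlt) hT0
  set κ := b i₀ + δ
  obtain ⟨K, hKκ, hKmin⟩ : ∃ K, b K < κ ∧ ∀ i < K, κ ≤ b i := by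
    obtain ⟨K, hK, hKmin⟩ :=
      exists_minimal_of_wellFoundedLT (fun i => b i < κ) ⟨i₀, lt_add_of_pos_right _ hδ⟩
    exact ⟨K, hK, fun i hi => not_lt.1 fun h => (hKmin h hi.le).not_gt hi⟩
  have hle_add : ∀ s ∈ Ioo 0 T, stepFun n tt (b ⊔ fun _ => κ) s ≤ stepFun n tt b s + δ := by
    intro s hs
    obtain ⟨i, hi⟩ := exists_mem_Ico (htt0 ▸ Ioo_subset_Ico_self hs)
    rw [stepFun_eq_of_mem htt _ hi, stepFun_eq_of_mem htt _ hi]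
    exact sup_le (le_add_of_nonneg_right hδ.le) ((add_le_add_iff_right δ).2 (hi₀ i))
  have hT_le : ∫ s in Ioo 0 T, stepFun n tt (b ⊔ fun _ => κ) s ≤ ∫ s in Ioo 0 T, w s :=
    calc ∫ s in Ioo 0 T, stepFun n tt (b ⊔ fun _ => κ) s
        ≤ ∫ s in Ioo 0 T, (stepFun n tt b s + δ) :=
          setIntegral_mono_on (integrable_stepFun _).integrableOn
            ((integrable_stepFun b).integrableOn.add (integrableOn_const (by simp)))
            measurableSet_Ioo hle_add
      _ = ∫ s in Ioo 0 T, w s := by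
          rw [integral_add (integrable_stepFun b).integrableOn (integrableOn_const (by simp)),
            setIntegral_const, Real.volume_real_Ioo_of_le hT0.le, smul_eq_mul, sub_zero,
            mul_div_cancel₀ _ hT0.ne']
          ring
  exact ⟨b ⊔ fun _ => κ, hb.sup antitone_const, le_sup_left,
    ⟨i₀, lt_sup_of_lt_right (lt_add_of_pos_right _ hδ)⟩,
    fun t ht => integral_stepFun_sup_const_le hI hw htt0 htt hT hb hKκ.le hKmin hsub hT_le ht⟩

end perturbation

theorem statement10_general (I : Set ℝ) (hI : OLDomain I) (φ w : ℝ → ℝ)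
    (hφ : NFun φ) (hw : IsWeight I w)
    (n : ℕ) (tt : Fin (n+1) → ℝ) (a : Fin n → ℝ)
    (htt0 : tt 0 = 0) (httm : StrictMono tt) (httI : tt (Fin.last n) ∈ I)
    (ha : StrictAnti a) (hapos : ∀ i, 0 < a i)
    (b : Fin n → ℝ) (hb : Antitone b) (hbpos : ∀ i, 0 < b i)
    (hsub : Submaj I w (stepFun n tt b))
    (hmin : (∫⁻ t in I, phiRatio φ (stepFun n tt a t) (stepFun n tt b t))
        = Pmod I φ w (stepFun n tt a)) :
    (∫ s in Ioo (0:ℝ) (tt (Fin.last n)), stepFun n tt b s)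
      = ∫ s in Ioo (0:ℝ) (tt (Fin.last n)), w s := by
  have hIco : Ico 0 (tt (Fin.last n)) ⊆ I := Ico_subset_Icc_self.trans (hI.Icc_subset httI)
  have hsubR := (submaj_stepFun_iff hI hw htt0 httm httI hb fun i => (hbpos i).le).1 hsub
  refine (hsubR _ httI).antisymm (not_lt.1 fun hlt => ?_)
  obtain ⟨b', hb'anti, hbb', hlt', hsub'⟩ :=
    exists_submaj_stepFun_gt hI hw htt0 httm httI hb hsubR hlt
  have hb'pos : ∀ i, 0 < b' i := fun i => (hbpos i).trans_le (hbb' i)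
  have hPmod : Pmod I φ w (stepFun n tt a) ≤
      ∫⁻ t in I, phiRatio φ (stepFun n tt a t) (stepFun n tt b' t) := by
    refine (Pmod_le_of_submaj (measurable_stepFun b')
      ((submaj_stepFun_iff hI hw htt0 httm httI hb'anti fun i => (hb'pos i).le).2 hsub')).trans_eq
      (setLIntegral_congr_fun hI.measurableSet fun t ht => ?_)
    rw [decRearr_stepFun htt0 httm hIco ha.antitone (fun i => (hapos i).le) (hI.subset_Ici ht),
      abs_of_nonneg (stepFun_nonneg (fun i => (hb'pos i).le) t)]
  refine (hPmod.trans_lt ?_).ne hmin.symm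
  exact setLIntegral_phiRatio_stepFun_lt hφ httm (htt0 ▸ hIco) hapos hbpos hbb' hlt'

theorem statement10 (I : Set ℝ) (hI : OLDomain I) (φ w : ℝ → ℝ)
    (hφ : NFun φ) (hw : IsWeight I w)
    (n : ℕ) (hn : 0 < n) (tt : Fin (n+1) → ℝ) (a : Fin n → ℝ)
    (htt0 : tt 0 = 0) (httm : StrictMono tt) (httI : tt (Fin.last n) ∈ I)
    (ha : StrictAnti a) (hapos : ∀ i, 0 < a i)
    (b : Fin n → ℝ) (hb : Antitone b) (hbpos : ∀ i, 0 < b i)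
    (hsub : Submaj I w (stepFun n tt b))
    (hmin : (∫⁻ t in I, phiRatio φ (stepFun n tt a t) (stepFun n tt b t))
        = Pmod I φ w (stepFun n tt a)) :
    (∫ s in Ioo (0:ℝ) (tt (Fin.last n)), stepFun n tt b s)
      = ∫ s in Ioo (0:ℝ) (tt (Fin.last n)), w s :=
  statement10_general I hI φ w hφ hw n tt a htt0 httm httI ha hapos b hb hbpos hsub hmin
end
end

section
/- Let φ be a strictly convex N-function, f = Σ_{i=1}^n a_i·χ_{A_i} with a_1 > a_2 > … > a_n > 0, A_i = [t_{i−1}, t_i), 0 = t_0 < t_1 < … < t_n < ∞, and g = Σ_{i=1}^n b_i·χ_{A_i} with b_1, …, b_n > 0. Set λ = G(t_n)/F(t_n), where F(t) = ∫₀ᵗ f and G(t) = ∫₀ᵗ g. If g ≠ λ·f, then ∫₀^{t_n} φ(f/g)·g > ∫₀^{t_n} φ(f/(λf))·λf = φ(1/λ)·λ·F(t_n). -/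
/-! Both integrands are constant on every `Aᵢ`, so the integrals are finite sums. With
`xᵢ = aᵢ |Aᵢ|`, `yᵢ = bᵢ |Aᵢ|`, `X = ∑ xᵢ = F(tₙ)` and `Y = ∑ yᵢ = G(tₙ)`, the left side is
`∑ φ(xᵢ/yᵢ) yᵢ` and the right side is `φ(X/Y) Y`. After dividing by `Y` this is the strict Jensen
inequality for the weights `yᵢ/Y`; it is strict because `g ≠ λf` says that the ratios `xᵢ/yᵢ` are
not all equal to their weighted mean `X/Y`. -/

open MeasureTheory Set Filter
open scoped ENNReal

noncomputable section

lemma intervalIntegrable_and_integral_eq_of_eqOn_Ioo {h : ℝ → ℝ} {x y c : ℝ} (hxy : x ≤ y)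
    (hc : EqOn h (fun _ => c) (Ioo x y)) :
    IntervalIntegrable h volume x y ∧ ∫ s in x..y, h s = c * (y - x) := by
  refine ⟨?_, ?_⟩
  · rw [intervalIntegrable_iff_integrableOn_Ioo_of_le hxy]
    exact (integrableOn_const (by simp) (by simp)).congr_fun hc.symm measurableSet_Ioo
  · rw [intervalIntegral.integral_congr_Ioo_of_le hxy hc, intervalIntegral.integral_const,
      smul_eq_mul, mul_comm]

lemma intervalIntegrable_and_integral_eq_sum_of_eqOn_Ioo {n : ℕ} {tt : Fin (n + 1) → ℝ}
    (htt : Monotone tt) {h : ℝ → ℝ} {c : Fin n → ℝ}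
    (hc : ∀ i, EqOn h (fun _ => c i) (Ioo (tt i.castSucc) (tt i.succ))) :
    IntervalIntegrable h volume (tt 0) (tt (Fin.last n)) ∧
      ∫ s in tt 0..tt (Fin.last n), h s = ∑ i, c i * (tt i.succ - tt i.castSucc) := by
  induction n with
  | zero => simp [Fin.last_zero]
  | succ n ih =>
    obtain ⟨hint, hsum⟩ := ih (htt.comp Fin.strictMono_castSucc.monotone)
      (c := c ∘ Fin.castSucc) fun i => by
        simpa only [Function.comp_apply, Fin.succ_castSucc] using hc i.castSucc
    obtain ⟨hint', hlast⟩ := intervalIntegrable_and_integral_eq_of_eqOn_Ioo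
      (htt Fin.castSucc_lt_succ.le) (hc (Fin.last n))
    simp only [Function.comp_apply, Fin.castSucc_zero, ← Fin.succ_castSucc] at hint hsum
    rw [Fin.succ_last] at hint' hlast
    refine ⟨hint.trans hint', ?_⟩
    rw [Fin.sum_univ_castSucc, ← intervalIntegral.integral_add_adjacent_intervals hint hint',
      hsum, hlast, Fin.succ_last]

lemma stepFun_eq_of_mem_Ico {n : ℕ} {tt : Fin (n + 1) → ℝ} (htt : StrictMono tt)
    (c : Fin n → ℝ) {i : Fin n} {s : ℝ} (hs : s ∈ Ico (tt i.castSucc) (tt i.succ)) :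
    stepFun n tt c s = c i := by
  rw [stepFun, Finset.sum_eq_single i (fun j _ hji => if_neg ?_) (by simp), if_pos ⟨hs.1, hs.2⟩]
  rintro ⟨hjs, hsj⟩
  rcases lt_or_gt_of_ne hji with hlt | hgt
  · exact (htt.monotone (Fin.succ_le_castSucc_iff.2 hlt)).trans hs.1 |>.not_gt hsj
  · exact (htt.monotone (Fin.succ_le_castSucc_iff.2 hgt)).trans hjs |>.not_gt hs.2

lemma setIntegral_Ioo_comp_stepFun {n : ℕ} {tt : Fin (n + 1) → ℝ} (htt : StrictMono tt)
    (F : ℝ → ℝ → ℝ) (a b : Fin n → ℝ) :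
    ∫ s in Ioo (tt 0) (tt (Fin.last n)), F (stepFun n tt a s) (stepFun n tt b s)
      = ∑ i, F (a i) (b i) * (tt i.succ - tt i.castSucc) := by
  rw [← integral_Ioc_eq_integral_Ioo, ← intervalIntegral.integral_of_le
    (htt.monotone (Fin.zero_le _))]
  refine (intervalIntegrable_and_integral_eq_sum_of_eqOn_Ioo htt.monotone fun i s hs => ?_).2
  simp only [stepFun_eq_of_mem_Ico htt _ (Ioo_subset_Ico_self hs)]

lemma StrictConvexOn.map_sum_div_sum_mul_sum_lt {ι : Type*} {s : Finset ι} {D : Set ℝ}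
    {φ : ℝ → ℝ} (hφ : StrictConvexOn ℝ D φ) {x y : ι → ℝ} (hy : ∀ i ∈ s, 0 < y i)
    (hmem : ∀ i ∈ s, x i / y i ∈ D)
    (hne : ∃ j ∈ s, x j / y j ≠ (∑ i ∈ s, x i) / ∑ i ∈ s, y i) :
    φ ((∑ i ∈ s, x i) / ∑ i ∈ s, y i) * ∑ i ∈ s, y i < ∑ i ∈ s, φ (x i / y i) * y i := by
  obtain ⟨j, hj, hj_ne⟩ := hne
  set Y := ∑ i ∈ s, y i
  have hY : 0 < Y := Finset.sum_pos hy ⟨j, hj⟩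
  have hw : ∀ i ∈ s, 0 < y i / Y := fun i hi => div_pos (hy i hi) hY
  have hw_sum : ∑ i ∈ s, y i / Y = 1 := by rw [← Finset.sum_div, div_self hY.ne']
  have hmean : ∑ i ∈ s, (y i / Y) • (x i / y i) = (∑ i ∈ s, x i) / Y := by
    rw [Finset.sum_div]
    refine Finset.sum_congr rfl fun i hi => ?_
    rw [smul_eq_mul]
    field_simp [(hy i hi).ne']
  have hnonconst : ∃ j ∈ s, ∃ k ∈ s, x j / y j ≠ x k / y k := by
    by_contra! hconst
    rw [← hmean, Finset.sum_congr rfl fun i hi => by rw [smul_eq_mul, hconst i hi j hj],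
      ← Finset.sum_mul, hw_sum, one_mul] at hj_ne
    exact hj_ne rfl
  have jensen := hφ.map_sum_lt hw hw_sum hmem hnonconst
  rw [hmean] at jensen
  calc φ ((∑ i ∈ s, x i) / Y) * Y < (∑ i ∈ s, (y i / Y) • φ (x i / y i)) * Y :=
        mul_lt_mul_of_pos_right jensen hY
    _ = ∑ i ∈ s, φ (x i / y i) * y i := by
        rw [Finset.sum_mul]
        refine Finset.sum_congr rfl fun i _ => ?_
        rw [smul_eq_mul]
        field_simp

theorem statement12_general (φ : ℝ → ℝ) (hsc : StrictConvexOn ℝ (Ici 0) φ)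
    (n : ℕ) (tt : Fin (n+1) → ℝ) (a b : Fin n → ℝ)
    (htt0 : tt 0 = 0) (httm : StrictMono tt)
    (hapos : ∀ i, 0 < a i) (hbpos : ∀ i, 0 < b i)
    (lam : ℝ)
    (hlam : lam = (∫ s in Ioo (0:ℝ) (tt (Fin.last n)), stepFun n tt b s) /
        ∫ s in Ioo (0:ℝ) (tt (Fin.last n)), stepFun n tt a s)
    (hne : ∃ i, b i ≠ lam * a i) :
    ((∫ t in Ioo (0:ℝ) (tt (Fin.last n)),
        φ (stepFun n tt a t / stepFun n tt b t) * stepFun n tt b t)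
      > ∫ t in Ioo (0:ℝ) (tt (Fin.last n)),
          φ (stepFun n tt a t / (lam * stepFun n tt a t)) * (lam * stepFun n tt a t)) ∧
    ((∫ t in Ioo (0:ℝ) (tt (Fin.last n)),
        φ (stepFun n tt a t / (lam * stepFun n tt a t)) * (lam * stepFun n tt a t))
      = φ (1 / lam) * lam * ∫ s in Ioo (0:ℝ) (tt (Fin.last n)), stepFun n tt a s) := by
  set Δ : Fin n → ℝ := fun i => tt i.succ - tt i.castSucc
  have hΔ : ∀ i, 0 < Δ i := fun i => sub_pos.2 (httm Fin.castSucc_lt_succ)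
  rw [← htt0] at hlam ⊢
  rw [setIntegral_Ioo_comp_stepFun httm (fun x _ => x) a b,
    setIntegral_Ioo_comp_stepFun httm (fun _ y => y) a b] at hlam
  rw [setIntegral_Ioo_comp_stepFun httm (fun x _ => x) a b,
    setIntegral_Ioo_comp_stepFun httm (fun x y => φ (x / y) * y) a b,
    setIntegral_Ioo_comp_stepFun httm (fun x _ => φ (x / (lam * x)) * (lam * x)) a b]
  set X := ∑ i, a i * Δ i
  set Y := ∑ i, b i * Δ i
  obtain ⟨j, hj⟩ := hne
  have hX : 0 < X := Finset.sum_pos (fun i _ => mul_pos (hapos i) (hΔ i)) ⟨j, Finset.mem_univ j⟩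
  have hY : 0 < Y := Finset.sum_pos (fun i _ => mul_pos (hbpos i) (hΔ i)) ⟨j, Finset.mem_univ j⟩
  have hmid : ∑ i, φ (a i / (lam * a i)) * (lam * a i) * Δ i = φ (1 / lam) * lam * X := by
    rw [Finset.mul_sum]
    refine Finset.sum_congr rfl fun i _ => ?_
    rw [div_mul_cancel_right₀ (hapos i).ne', one_div]
    ring
  refine ⟨?_, hmid⟩
  have hrhs : φ (1 / lam) * lam * X = φ (X / Y) * Y := by
    rw [hlam, one_div_div, mul_assoc, div_mul_cancel₀ _ hX.ne']
  have hleft : ∑ i, φ (a i / b i) * b i * Δ i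
      = ∑ i, φ (a i * Δ i / (b i * Δ i)) * (b i * Δ i) := by
    refine Finset.sum_congr rfl fun i _ => ?_
    rw [mul_div_mul_right _ _ (hΔ i).ne', mul_assoc]
  have hj' : a j * Δ j / (b j * Δ j) ≠ X / Y := by
    rw [mul_div_mul_right _ _ (hΔ j).ne']
    contrapose! hj
    rw [hlam]
    field_simp [(hbpos j).ne'] at hj ⊢
    linarith
  rw [gt_iff_lt, hmid, hrhs, hleft]
  exact hsc.map_sum_div_sum_mul_sum_lt (fun i _ => mul_pos (hbpos i) (hΔ i))
    (fun i _ => div_nonneg (mul_pos (hapos i) (hΔ i)).le (mul_pos (hbpos i) (hΔ i)).le)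
    ⟨j, Finset.mem_univ j, hj'⟩

theorem statement12 (φ : ℝ → ℝ) (hφ : NFun φ) (hsc : StrictConvexOn ℝ (Ici 0) φ)
    (n : ℕ) (hn : 0 < n) (tt : Fin (n+1) → ℝ) (a b : Fin n → ℝ)
    (htt0 : tt 0 = 0) (httm : StrictMono tt)
    (ha : StrictAnti a) (hapos : ∀ i, 0 < a i) (hbpos : ∀ i, 0 < b i)
    (lam : ℝ)
    (hlam : lam = (∫ s in Ioo (0:ℝ) (tt (Fin.last n)), stepFun n tt b s) /
        ∫ s in Ioo (0:ℝ) (tt (Fin.last n)), stepFun n tt a s)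
    (hne : ∃ i, b i ≠ lam * a i) :
    ((∫ t in Ioo (0:ℝ) (tt (Fin.last n)),
        φ (stepFun n tt a t / stepFun n tt b t) * stepFun n tt b t)
      > ∫ t in Ioo (0:ℝ) (tt (Fin.last n)),
          φ (stepFun n tt a t / (lam * stepFun n tt a t)) * (lam * stepFun n tt a t)) ∧
    ((∫ t in Ioo (0:ℝ) (tt (Fin.last n)),
        φ (stepFun n tt a t / (lam * stepFun n tt a t)) * (lam * stepFun n tt a t))
      = φ (1 / lam) * lam * ∫ s in Ioo (0:ℝ) (tt (Fin.last n)), stepFun n tt a s) :=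
  statement12_general φ hsc n tt a b htt0 httm hapos hbpos lam hlam hne
end
end
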